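/- Assume the decomposition satisfies: for every n, either the set of midpoints of complementary intervals of Dₙ is contained in D_{n+1}, or every complementary interval of Dₙ meets D_{n+1} and the midpoint set of Dₙ's complementary intervals is contained in that of D_{n+1}. If (wₙ) does not tend to 0, then T_w has no finite one-sided derivative at any point x ∈ D. -/

import Mathlib

open Filter Topology

/-- The (viscosity/Fréchet) subdifferential of `f : ℝ → ℝ`, relative to the domain `s`,
at the point `x`: the set of `c` with
`liminf_{h → 0, x + h ∈ s} (f (x + h) - f x - c * h) / |h| ≥ 0`. -/
def subdifferentialWithin (f : ℝ → ℝ) (s : Set ℝ) (x : ℝ) : Set ℝ :=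
  {c | ∀ ε > (0 : ℝ), ∀ᶠ h in 𝓝[≠] (0 : ℝ), x + h ∈ s → -ε ≤ (f (x + h) - f x - c * h) / |h|}

/-- The superdifferential `∂⁺f(x) = -∂(-f)(x)`. -/
def superdifferentialWithin (f : ℝ → ℝ) (s : Set ℝ) (x : ℝ) : Set ℝ :=
  {c | -c ∈ subdifferentialWithin (fun y => -f y) s x}

/-- The set of midpoints of the connected components of the complement of `s` (the
bounded components being the open intervals between consecutive points of `s`). -/
def midpoints (s : Set ℝ) : Set ℝ :=
  {m | ∃ a ∈ s, ∃ b ∈ s, a < b ∧ Set.Ioo a b ∩ s = ∅ ∧ m = (a + b) / 2}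

lemma le_infDist' {s : Set ℝ} (hs : s.Nonempty) {x r : ℝ} (h : ∀ y ∈ s, r ≤ dist x y) :
    r ≤ Metric.infDist x s := by
  rw [Metric.infDist_eq_iInf]
  haveI := hs.to_subtype
  exact le_ciInf (fun y => h y y.2)

lemma nearest_right (S : Set ℝ) (hfin : S.Finite) (x : ℝ)
    (hL : ∃ a ∈ S, a ≤ x) (hR : ∃ b ∈ S, x < b) :
    ∃ p ∈ S, ∃ δ > (0:ℝ), (p ≤ x ∨ x + δ ≤ p) ∧
      ∀ y, x ≤ y → y < x + δ → Metric.infDist y S = |y - p| := by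
  obtain ⟨a, ⟨haS, hax⟩, hamax⟩ := Set.exists_max_image (S ∩ Set.Iic x) id
    (hfin.inter_of_left _) (by obtain ⟨a0, h1, h2⟩ := hL; exact ⟨a0, h1, h2⟩)
  obtain ⟨q, ⟨hqS, hxq⟩, hqmin⟩ := Set.exists_min_image (S ∩ Set.Ioi x) id
    (hfin.inter_of_left _) (by obtain ⟨b0, h1, h2⟩ := hR; exact ⟨b0, h1, h2⟩)
  simp only [id] at hamax hqmin
  rw [Set.mem_Iic] at hax
  rw [Set.mem_Ioi] at hxq
  have hSne : S.Nonempty := ⟨a, haS⟩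
  have haq : a < q := lt_of_le_of_lt hax hxq
  by_cases hc : x < (a + q) / 2
  · refine ⟨a, haS, (a + q) / 2 - x, by linarith, Or.inl hax, fun y hxy hyd => ?_⟩
    have hy2 : y < (a + q) / 2 := by linarith
    have hya : a ≤ y := le_trans hax hxy
    rw [abs_of_nonneg (by linarith)]
    apply le_antisymm
    · have := Metric.infDist_le_dist_of_mem (x := y) haS
      rwa [Real.dist_eq, abs_of_nonneg (by linarith)] at this
    · refine le_infDist' hSne (fun s hs => ?_)
      rw [Real.dist_eq]
      rcases le_or_gt s x with h | h
      · have : s ≤ a := hamax s ⟨hs, h⟩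
        rw [abs_of_nonneg (by linarith)]; linarith
      · have : q ≤ s := hqmin s ⟨hs, h⟩
        rw [abs_of_nonpos (by linarith)]; linarith
  · refine ⟨q, hqS, q - x, by linarith, Or.inr (by linarith), fun y hxy hyd => ?_⟩
    have hyq : y < q := by linarith
    rw [abs_of_nonpos (by linarith)]
    apply le_antisymm
    · have := Metric.infDist_le_dist_of_mem (x := y) hqS
      rwa [Real.dist_eq, abs_of_nonpos (by linarith)] at this
    · refine le_infDist' hSne (fun s hs => ?_)
      rw [Real.dist_eq]
      rcases le_or_gt s x with h | h
      · have hsa : s ≤ a := hamax s ⟨hs, h⟩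
        have : (a + q) / 2 ≤ x := by linarith
        rw [abs_of_nonneg (by linarith)]; linarith
      · have : q ≤ s := hqmin s ⟨hs, h⟩
        rw [abs_of_nonpos (by linarith)]; linarith

lemma aux_right (D : ℕ → Set ℝ) (w : ℕ → ℝ)
    (hDsub : ∀ n, D n ⊆ Set.Icc 0 1) (hDfin : ∀ n, (D n).Finite)
    (hDmono : ∀ n, D n ⊆ D (n + 1)) (h01 : ∀ n, (0:ℝ) ∈ D n ∧ (1:ℝ) ∈ D n)
    (hdec : ∀ n, midpoints (D n) ⊆ D (n + 1) ∨
      ((∀ a ∈ D n, ∀ b ∈ D n, a < b → Set.Ioo a b ∩ D n = ∅ →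
          (Set.Ioo a b ∩ D (n + 1)).Nonempty) ∧
        midpoints (D n) ⊆ midpoints (D (n + 1))))
    (hwc0 : ¬ Tendsto w atTop (𝓝 0))
    (x : ℝ) (n₀ : ℕ) (hxD : x ∈ D n₀) (hx1 : x < 1) :
    ¬ DifferentiableWithinAt ℝ
      (fun z => ∑' n : ℕ, w n * Metric.infDist z (D n)) (Set.Icc x 1) x := by
  intro hdiff
  set F : ℝ → ℝ := fun z => ∑' n : ℕ, w n * Metric.infDist z (D n) with hFdef
  have hmono' : ∀ m n, m ≤ n → D m ⊆ D n := by
    intro m n h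
    induction h with
    | refl => exact fun _ h => h
    | step _ ih => exact fun y hy => hDmono _ (ih hy)
  have hx0 : 0 ≤ x := (hDsub n₀ hxD).1
  -- next point after x in each D m
  have hbex : ∀ m : ℕ, ∃ bm : ℝ, bm ∈ D m ∧ x < bm ∧ ∀ y ∈ D m, x < y → bm ≤ y := by
    intro m
    obtain ⟨bm, ⟨h1, h2⟩, h3⟩ := Set.exists_min_image (D m ∩ Set.Ioi x) id
      ((hDfin m).inter_of_left _) ⟨1, (h01 m).2, hx1⟩
    simp only [id] at h3
    exact ⟨bm, h1, h2, fun y hy hxy => h3 y ⟨hy, hxy⟩⟩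
  choose b hbD hxb hble using hbex
  have hgapb : ∀ m, Set.Ioo x (b m) ∩ D m = ∅ := by
    intro m
    ext y
    simp only [Set.mem_inter_iff, Set.mem_Ioo, Set.mem_empty_iff_false, iff_false, not_and]
    intro ⟨h1, h2⟩ hy
    exact absurd (hble m y hy h1) (by linarith)
  have hbanti : ∀ m n, m ≤ n → b n ≤ b m := by
    intro m n h
    exact hble n (b m) (hmono' m n h (hbD m)) (hxb m)
  have hb1 : ∀ m, b m ≤ 1 := fun m => (hDsub m (hbD m)).2
  -- the halving property
  have hhalf : ∀ m, n₀ ≤ m → b (m + 1) - x ≤ (b m - x) / 2 := by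
    intro m hm
    have hxm : x ∈ D m := hmono' n₀ m hm hxD
    have hmid : (x + b m) / 2 ∈ midpoints (D m) :=
      ⟨x, hxm, b m, hbD m, hxb m, hgapb m, rfl⟩
    have hxmid : x < (x + b m) / 2 := by have := hxb m; linarith
    rcases hdec m with h | ⟨hne, hmidsub⟩
    · have := hble (m + 1) _ (h hmid) hxmid
      linarith
    · obtain ⟨a', ha', b', hb', hab', hgap', heq'⟩ := hmidsub hmid
      have hxm1 : x ∈ D (m + 1) := hDmono m hxm
      have hxa' : x < a' := by
        rcases lt_trichotomy a' x with h | h | h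
        · exfalso
          have hxb' : x < b' := by nlinarith [hxb m]
          have : x ∈ Set.Ioo a' b' ∩ D (m + 1) := ⟨⟨h, hxb'⟩, hxm1⟩
          rw [hgap'] at this
          exact this
        · exfalso
          have hb'eq : b' = b m := by linarith
          rw [h, hb'eq] at hgap'
          obtain ⟨y, hy⟩ := hne x hxm (b m) (hbD m) (hxb m) (hgapb m)
          rw [hgap'] at hy
          exact hy
        · exact h
      have h1 : b (m + 1) ≤ a' := hble (m + 1) a' ha' hxa'
      have h2 : a' < (x + b m) / 2 := by linarith
      linarith
  -- the approximating sequence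
  obtain ⟨t, htdef⟩ : ∃ t : ℕ → ℝ, ∀ j, t j = b (n₀ + j + 1) - x := ⟨_, fun _ => rfl⟩
  obtain ⟨z, hzdef⟩ : ∃ z : ℕ → ℝ, ∀ j, z j = b (n₀ + j + 1) := ⟨_, fun _ => rfl⟩
  have htpos : ∀ j, 0 < t j := by
    intro j
    rw [htdef j]
    have := hxb (n₀ + j + 1)
    linarith
  have htdec : ∀ j, t (j + 1) ≤ t j / 2 := by
    intro j
    rw [htdef (j + 1), htdef j]
    have e : n₀ + (j + 1) + 1 = (n₀ + j + 1) + 1 := by omega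
    rw [e]
    exact hhalf (n₀ + j + 1) (by omega)
  have hgeo : ∀ j, t j ≤ t 0 * (1 / 2) ^ j := by
    intro j
    induction j with
    | zero => simp
    | succ j ih =>
      have := htdec j
      calc t (j + 1) ≤ t j / 2 := this
      _ ≤ (t 0 * (1 / 2) ^ j) / 2 := by linarith
      _ = t 0 * (1 / 2) ^ (j + 1) := by ring
  have htto : Tendsto t atTop (𝓝 0) := by
    refine squeeze_zero (fun j => (htpos j).le) hgeo ?_
    have h2 : Tendsto (fun j : ℕ => ((1:ℝ) / 2) ^ j) atTop (𝓝 0) :=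
      tendsto_pow_atTop_nhds_zero_of_lt_one (by norm_num) (by norm_num)
    simpa using h2.const_mul (t 0)
  have hzx : ∀ j, z j = x + t j := fun j => by rw [hzdef j, htdef j]; ring
  have hzto : Tendsto z atTop (𝓝 x) := by
    have h : Tendsto (fun j => x + t j) atTop (𝓝 (x + 0)) := tendsto_const_nhds.add htto
    rw [add_zero] at h
    exact h.congr (fun j => (hzx j).symm)
  -- infDist values
  have hginfx : ∀ k, n₀ ≤ k → Metric.infDist x (D k) = 0 :=
    fun k hk => Metric.infDist_zero_of_mem (hmono' n₀ k hk hxD)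
  have hgz_hi : ∀ j k, n₀ + j + 1 ≤ k → Metric.infDist (z j) (D k) = 0 := by
    intro j k hk
    rw [hzdef j]
    exact Metric.infDist_zero_of_mem (hmono' _ k hk (hbD _))
  have hthalfk : ∀ j k, n₀ ≤ k → k ≤ n₀ + j → 2 * t j ≤ b k - x := by
    intro j k hk1 hk2
    have h1 : t j ≤ (b (n₀ + j) - x) / 2 := by
      rw [htdef j]
      exact hhalf (n₀ + j) (by omega)
    have h2 : b (n₀ + j) ≤ b k := hbanti k (n₀ + j) hk2
    linarith
  have hgz_mid : ∀ j k, n₀ ≤ k → k ≤ n₀ + j → Metric.infDist (z j) (D k) = t j := by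
    intro j k hk1 hk2
    have hxk : x ∈ D k := hmono' n₀ k hk1 hxD
    apply le_antisymm
    · rw [hzx j]
      have := Metric.infDist_le_dist_of_mem (x := x + t j) hxk
      rwa [Real.dist_eq, add_sub_cancel_left, abs_of_pos (htpos j)] at this
    · refine le_infDist' ⟨x, hxk⟩ (fun y hy => ?_)
      rw [Real.dist_eq, hzx j]
      rcases le_or_gt y x with h | h
      · rw [abs_of_nonneg (by linarith [htpos j])]; linarith [htpos j]
      · have hbk : b k ≤ y := hble k y hy h
        have h2t := hthalfk j k hk1 hk2
        rw [abs_of_nonpos (by linarith)]; linarith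
  -- finite-sum formulas
  have hFx : F x = ∑ k ∈ Finset.range n₀, w k * Metric.infDist x (D k) := by
    apply tsum_eq_sum
    intro k hk
    rw [Finset.mem_range, not_lt] at hk
    rw [hginfx k hk, mul_zero]
  have hFz : ∀ j, F (z j) =
      ∑ k ∈ Finset.range (n₀ + j + 1), w k * Metric.infDist (z j) (D k) := by
    intro j
    apply tsum_eq_sum
    intro k hk
    rw [Finset.mem_range, not_lt] at hk
    rw [hgz_hi j k hk, mul_zero]
  -- slope decomposition
  obtain ⟨A, hAdef⟩ : ∃ A : ℕ → ℝ, ∀ j, A j = ∑ k ∈ Finset.range n₀,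
      w k * ((Metric.infDist (z j) (D k) - Metric.infDist x (D k)) / t j) := ⟨_, fun _ => rfl⟩
  obtain ⟨Sw, hSwdef⟩ : ∃ Sw : ℕ → ℝ, ∀ j, Sw j = ∑ k ∈ Finset.Ico n₀ (n₀ + j + 1), w k :=
    ⟨_, fun _ => rfl⟩
  have hQ : ∀ j, slope F x (z j) = A j + Sw j := by
    intro j
    have htne : t j ≠ 0 := ne_of_gt (htpos j)
    rw [slope_def_field, hFz j, hFx]
    have e2 : ∑ k ∈ Finset.range (n₀ + j + 1), w k * Metric.infDist (z j) (D k)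
        = (∑ k ∈ Finset.range n₀, w k * Metric.infDist (z j) (D k)) + Sw j * t j := by
      rw [Finset.range_eq_Ico, ← Finset.sum_Ico_consecutive _ (Nat.zero_le n₀)
        (by omega : n₀ ≤ n₀ + j + 1), ← Finset.range_eq_Ico]
      congr 1
      rw [hSwdef j, Finset.sum_mul]
      apply Finset.sum_congr rfl
      intro k hk
      rw [Finset.mem_Ico] at hk
      rw [hgz_mid j k hk.1 (by omega)]
    have e3 : A j = (∑ k ∈ Finset.range n₀,
        (w k * Metric.infDist (z j) (D k) - w k * Metric.infDist x (D k))) / t j := by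
      rw [hAdef j, Finset.sum_div]
      apply Finset.sum_congr rfl
      intro k _
      rw [← mul_div_assoc, mul_sub]
    rw [e2, e3, Finset.sum_sub_distrib]
    have e4 : z j - x = t j := by rw [hzx j]; ring
    rw [e4]
    field_simp
    ring
  -- limit of A
  have hterm : ∀ k : ℕ, ∃ Lk, Tendsto
      (fun j => w k * ((Metric.infDist (z j) (D k) - Metric.infDist x (D k)) / t j))
      atTop (𝓝 Lk) := by
    intro k
    obtain ⟨p, hpS, δ, hδ, hside, hval⟩ := nearest_right (D k) (hDfin k) x
      ⟨0, (h01 k).1, hx0⟩ ⟨b k, hbD k, hxb k⟩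
    have hgx : Metric.infDist x (D k) = |x - p| := hval x le_rfl (by linarith)
    have hev : ∀ᶠ j in atTop, t j < δ := htto.eventually (gt_mem_nhds hδ)
    rcases hside with hpx | hpd
    · refine ⟨w k, ?_⟩
      apply Tendsto.congr' ?_ (tendsto_const_nhds (x := w k))
      filter_upwards [hev] with j hj
      have hzv : Metric.infDist (z j) (D k) = |z j - p| :=
        hval (z j) (by rw [hzx j]; linarith [htpos j]) (by rw [hzx j]; linarith)
      rw [hzv, hgx, hzx j, abs_of_nonneg (by linarith [htpos j]), abs_of_nonneg (by linarith)]
      have e : x + t j - p - (x - p) = t j := by ring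
      rw [e, div_self (ne_of_gt (htpos j)), mul_one]
    · refine ⟨-w k, ?_⟩
      apply Tendsto.congr' ?_ (tendsto_const_nhds (x := -w k))
      filter_upwards [hev] with j hj
      have hzjp : z j < p := by rw [hzx j]; linarith
      have hzv : Metric.infDist (z j) (D k) = |z j - p| :=
        hval (z j) (by rw [hzx j]; linarith [htpos j]) (by rw [hzx j]; linarith)
      rw [hzv, hgx, abs_of_nonpos (by linarith), abs_of_nonpos (by linarith)]
      have e : -(z j - p) - -(x - p) = -(t j) := by rw [hzx j]; ring
      rw [e, neg_div, div_self (ne_of_gt (htpos j))]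
      ring_nf
  choose L hL using hterm
  have hLA : Tendsto A atTop (𝓝 (∑ k ∈ Finset.range n₀, L k)) := by
    have : Tendsto (fun j => ∑ k ∈ Finset.range n₀,
        w k * ((Metric.infDist (z j) (D k) - Metric.infDist x (D k)) / t j)) atTop
        (𝓝 (∑ k ∈ Finset.range n₀, L k)) :=
      tendsto_finset_sum _ (fun k _ => hL k)
    exact this.congr (fun j => (hAdef j).symm)
  -- the slope tends to the derivative
  have hder : HasDerivWithinAt F (derivWithin F (Set.Icc x 1) x) (Set.Icc x 1) x :=
    hdiff.hasDerivWithinAt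
  rw [hasDerivWithinAt_iff_tendsto_slope] at hder
  have hzin : Tendsto z atTop (𝓝[Set.Icc x 1 \ {x}] x) := by
    rw [tendsto_nhdsWithin_iff]
    refine ⟨hzto, Eventually.of_forall (fun j => ?_)⟩
    have h1 := hxb (n₀ + j + 1)
    have h2 := hb1 (n₀ + j + 1)
    rw [hzdef j]
    exact ⟨⟨h1.le, h2⟩, by simp only [Set.mem_singleton_iff]; intro h; linarith [h ▸ h1]⟩
  have htend : Tendsto (fun j => slope F x (z j)) atTop
      (𝓝 (derivWithin F (Set.Icc x 1) x)) := hder.comp hzin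
  -- conclude w → 0
  have hSwt : Tendsto Sw atTop
      (𝓝 (derivWithin F (Set.Icc x 1) x - ∑ k ∈ Finset.range n₀, L k)) := by
    have heq : ∀ j, slope F x (z j) - A j = Sw j := by
      intro j; rw [hQ j]; ring
    exact (htend.sub hLA).congr heq
  have hwt : Tendsto (fun j => w (n₀ + j + 1)) atTop (𝓝 0) := by
    have h1 := (hSwt.comp (tendsto_add_atTop_nat 1)).sub hSwt
    rw [sub_self] at h1
    apply h1.congr
    intro j
    simp only [Function.comp]
    rw [hSwdef (j + 1), hSwdef j]
    have e : n₀ + (j + 1) + 1 = (n₀ + j + 1) + 1 := by omega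
    rw [e, Finset.sum_Ico_succ_top (by omega : n₀ ≤ n₀ + j + 1)]
    ring
  apply hwc0
  rw [← tendsto_add_atTop_iff_nat (n₀ + 1)]
  have heq2 : (fun j => w (j + (n₀ + 1))) = fun j => w (n₀ + j + 1) := by
    funext j; congr 1; omega
  rw [heq2]
  exact hwt

lemma midpoints_reflect {S : Set ℝ} {m : ℝ} (h : (1 - m) ∈ midpoints S) :
    m ∈ midpoints {y : ℝ | 1 - y ∈ S} := by
  obtain ⟨a, ha, b, hb, hab, hgap, heq⟩ := h
  refine ⟨1 - b, by simp [hb], 1 - a, by simp [ha], by linarith, ?_, by linarith⟩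
  ext y
  simp only [Set.mem_inter_iff, Set.mem_Ioo, Set.mem_setOf_eq, Set.mem_empty_iff_false,
    iff_false, not_and]
  intro ⟨h1a, h1b⟩ hy
  have : 1 - y ∈ Set.Ioo a b ∩ S := ⟨⟨by linarith, by linarith⟩, hy⟩
  rw [hgap] at this
  exact this

lemma reflect_reflect (S : Set ℝ) : {y : ℝ | 1 - y ∈ {z : ℝ | 1 - z ∈ S}} = S := by
  ext y; simp

lemma midpoints_reflect_iff (S : Set ℝ) (m : ℝ) :
    m ∈ midpoints {y : ℝ | 1 - y ∈ S} ↔ (1 - m) ∈ midpoints S := by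
  constructor
  · intro h
    have h2 := midpoints_reflect (S := {y : ℝ | 1 - y ∈ S}) (m := 1 - m)
      (by simpa using h)
    rwa [reflect_reflect] at h2
  · exact midpoints_reflect

lemma infDist_reflect (S : Set ℝ) (hS : S.Nonempty) (z : ℝ) :
    Metric.infDist z {y : ℝ | 1 - y ∈ S} = Metric.infDist (1 - z) S := by
  have hS' : {y : ℝ | 1 - y ∈ S}.Nonempty := by
    obtain ⟨s, hs⟩ := hS
    exact ⟨1 - s, by simp [hs]⟩
  have hd : ∀ a b : ℝ, dist a (1 - b) = dist (1 - a) b := by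
    intro a b
    rw [Real.dist_eq, Real.dist_eq, ← abs_neg]
    ring_nf
  apply le_antisymm
  · refine le_infDist' hS (fun y hy => ?_)
    have : Metric.infDist z {y : ℝ | 1 - y ∈ S} ≤ dist z (1 - y) :=
      Metric.infDist_le_dist_of_mem (by simp [hy])
    rwa [hd] at this
  · refine le_infDist' hS' (fun y hy => ?_)
    have h1 : Metric.infDist (1 - z) S ≤ dist (1 - z) (1 - y) :=
      Metric.infDist_le_dist_of_mem hy
    calc Metric.infDist (1 - z) S ≤ dist (1 - z) (1 - y) := h1
    _ = dist z y := by rw [← hd]; ring_nf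

theorem stmt12
(D : ℕ → Set ℝ) (α : ℕ → ℝ) (ρ : ℝ) (w : ℕ → ℝ)
    (hD0 : (0 : ℝ) ∈ D 0) (hD1 : (1 : ℝ) ∈ D 0)
    (hDsub : ∀ n, D n ⊆ Set.Icc 0 1)
    (hDfin : ∀ n, (D n).Finite)
    (hDmono : ∀ n, D n ⊆ D (n + 1))
    (hρ : ρ ∈ Set.Ioc (0 : ℝ) 1)
    (hα : Summable α)
    (hgapU : ∀ n, ∀ a ∈ D n, ∀ b ∈ D n, a < b → Set.Ioo a b ∩ D n = ∅ → b - a ≤ α n)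
    (hgapL : ∀ n, ∀ a ∈ D n, ∀ b ∈ D n, a < b → ρ * α n ≤ b - a)
    (hwα : Summable (fun n => |w n * α n|))
    (hdec : ∀ n, midpoints (D n) ⊆ D (n + 1) ∨
      ((∀ a ∈ D n, ∀ b ∈ D n, a < b → Set.Ioo a b ∩ D n = ∅ →
          (Set.Ioo a b ∩ D (n + 1)).Nonempty) ∧
        midpoints (D n) ⊆ midpoints (D (n + 1))))
    (hwc0 : ¬ Tendsto w atTop (𝓝 0))
    (x : ℝ) (hx : x ∈ ⋃ n, D n) :
    (x < 1 → ¬ DifferentiableWithinAt ℝ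
        (fun z => ∑' n : ℕ, w n * Metric.infDist z (D n)) (Set.Icc x 1) x) ∧
    (0 < x → ¬ DifferentiableWithinAt ℝ
        (fun z => ∑' n : ℕ, w n * Metric.infDist z (D n)) (Set.Icc 0 x) x) := by
  have h01 : ∀ n, (0:ℝ) ∈ D n ∧ (1:ℝ) ∈ D n := by
    intro n
    induction n with
    | zero => exact ⟨hD0, hD1⟩
    | succ n ih => exact ⟨hDmono n ih.1, hDmono n ih.2⟩
  obtain ⟨n₀, hxD⟩ : ∃ n₀, x ∈ D n₀ := by simpa using hx
  constructor
  · intro hx1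
    exact aux_right D w hDsub hDfin hDmono h01 hdec hwc0 x n₀ hxD hx1
  · intro hx0 hdiff
    have hxle1 : x ≤ 1 := (hDsub n₀ hxD).2
    set D' : ℕ → Set ℝ := fun n => {y : ℝ | 1 - y ∈ D n} with hD'
    have hD'sub : ∀ n, D' n ⊆ Set.Icc 0 1 := by
      intro n y hy
      have h := hDsub n hy
      exact ⟨by linarith [h.2], by linarith [h.1]⟩
    have hD'fin : ∀ n, (D' n).Finite := by
      intro n
      have he : D' n = (fun y : ℝ => 1 - y) ⁻¹' (D n) := rfl
      rw [he]
      apply Set.Finite.preimage _ (hDfin n)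
      intro a _ c _ h
      dsimp at h
      linarith
    have hD'mono : ∀ n, D' n ⊆ D' (n + 1) := fun n y hy => hDmono n hy
    have h01' : ∀ n, (0:ℝ) ∈ D' n ∧ (1:ℝ) ∈ D' n := by
      intro n
      constructor
      · show (1 - (0:ℝ)) ∈ D n
        rw [sub_zero]; exact (h01 n).2
      · show (1 - (1:ℝ)) ∈ D n
        rw [sub_self]; exact (h01 n).1
    have hdec' : ∀ n, midpoints (D' n) ⊆ D' (n + 1) ∨
        ((∀ a ∈ D' n, ∀ b ∈ D' n, a < b → Set.Ioo a b ∩ D' n = ∅ →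
            (Set.Ioo a b ∩ D' (n + 1)).Nonempty) ∧
          midpoints (D' n) ⊆ midpoints (D' (n + 1))) := by
      intro n
      rcases hdec n with h | ⟨hne, hms⟩
      · left
        intro m hm
        have h1 : (1 - m) ∈ midpoints (D n) := (midpoints_reflect_iff (D n) m).1 hm
        exact h h1
      · right
        constructor
        · intro a ha b hb hab hgap
          have hgapD : Set.Ioo (1 - b) (1 - a) ∩ D n = ∅ := by
            ext y
            simp only [Set.mem_inter_iff, Set.mem_Ioo, Set.mem_empty_iff_false, iff_false,
              not_and]
            intro ⟨hy1, hy2⟩ hy3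
            have : 1 - y ∈ Set.Ioo a b ∩ D' n :=
              ⟨⟨by linarith, by linarith⟩, by show 1 - (1 - y) ∈ D n; simpa using hy3⟩
            rw [hgap] at this
            exact this
          obtain ⟨q, hq1, hq2⟩ := hne (1 - b) hb (1 - a) ha (by linarith) hgapD
          refine ⟨1 - q, ⟨⟨by linarith [hq1.2], by linarith [hq1.1]⟩, ?_⟩⟩
          show 1 - (1 - q) ∈ D (n + 1)
          simpa using hq2
        · intro m hm
          have h1 : (1 - m) ∈ midpoints (D n) := (midpoints_reflect_iff (D n) m).1 hm
          exact (midpoints_reflect_iff (D (n + 1)) m).2 (hms h1)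
    have hx'D : (1 - x) ∈ D' n₀ := by
      show 1 - (1 - x) ∈ D n₀
      simpa using hxD
    apply aux_right D' w hD'sub hD'fin hD'mono h01' hdec' hwc0 (1 - x) n₀ hx'D (by linarith)
    have hDne : ∀ n, (D n).Nonempty := fun n => ⟨0, (h01 n).1⟩
    have hfe : (fun z => ∑' n : ℕ, w n * Metric.infDist z (D' n)) =
        (fun z => ∑' n : ℕ, w n * Metric.infDist (1 - z) (D n)) := by
      funext z
      apply tsum_congr
      intro n
      rw [infDist_reflect (D n) (hDne n) z]
    rw [hfe]
    have hg : DifferentiableWithinAt ℝ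
        (fun z => ∑' n : ℕ, w n * Metric.infDist z (D n)) (Set.Icc 0 x) (1 - (1 - x)) := by
      have e : 1 - (1 - x) = x := by ring
      rw [e]
      exact hdiff
    have hf : DifferentiableWithinAt ℝ (fun z : ℝ => 1 - z) (Set.Icc (1 - x) 1) (1 - x) :=
      ((differentiable_id.const_sub 1).differentiableAt).differentiableWithinAt
    have hmaps : Set.MapsTo (fun z : ℝ => 1 - z) (Set.Icc (1 - x) 1) (Set.Icc 0 x) := by
      intro y hy
      simp only [Set.mem_Icc] at hy ⊢
      exact ⟨by linarith [hy.2], by linarith [hy.1]⟩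
    have hcomp := hg.comp (1 - x) hf hmaps
    exact hcomp
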